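/- Regarding ℝ³ as a vector space over ℚ, the ℚ-linear span of the set E of edge midpoints of the regular icosahedron has dimension exactly 6 over ℚ. -/
import Mathlib


noncomputable section

/-- The golden ratio `(1+√5)/2`. -/
def gold : ℝ := (1 + Real.sqrt 5) / 2

/-- A point of `ℝ³` (with the Euclidean norm) from its three coordinates. -/
def pt (x y z : ℝ) : EuclideanSpace ℝ (Fin 3) := (WithLp.equiv 2 (Fin 3 → ℝ)).symm ![x, y, z]

/-- The vertices `(0, ±1, ±φ), (±1, ±φ, 0), (±φ, 0, ±1)` of the regular icosahedron. -/
def icoVerts : Set (EuclideanSpace ℝ (Fin 3)) :=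
  {w | ∃ s t : ℝ, (s = 1 ∨ s = -1) ∧ (t = 1 ∨ t = -1) ∧
    (w = pt 0 s (t * gold) ∨ w = pt s (t * gold) 0 ∨ w = pt (t * gold) 0 s)}

/-- The set `E` of midpoints of edges of the icosahedron: the edges are the pairs of
vertices at distance 2. -/
def icoMid : Set (EuclideanSpace ℝ (Fin 3)) :=
  {e | ∃ u ∈ icoVerts, ∃ v ∈ icoVerts, ‖u - v‖ = 2 ∧ e = (2⁻¹ : ℝ) • (u + v)}

/-- `M`, the ℤ-span of the set of edge midpoints of the icosahedron. -/
def icoM : AddSubgroup (EuclideanSpace ℝ (Fin 3)) := AddSubgroup.closure icoMid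

/- ### Auxiliary material -/

lemma gsq : gold ^ 2 = gold + 1 := by
  have h5 : Real.sqrt 5 ^ 2 = 5 := Real.sq_sqrt (by norm_num)
  unfold gold; nlinarith [h5]

lemma pt_sub (a b c d e f : ℝ) : pt a b c - pt d e f = pt (a-d) (b-e) (c-f) := by
  ext i; fin_cases i <;> simp [pt]

lemma norm_pt (a b c : ℝ) : ‖pt a b c‖ = Real.sqrt (a^2+b^2+c^2) := by
  rw [EuclideanSpace.norm_eq]
  simp [Fin.sum_univ_three, pt, sq_abs]

lemma norm_pt_two {a b c : ℝ} (h : a^2+b^2+c^2 = 4) : ‖pt a b c‖ = 2 := by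
  rw [norm_pt, h, show (4:ℝ) = 2^2 by norm_num, Real.sqrt_sq (by norm_num)]

/-- The six candidate basis vectors. -/
def vv : Fin 6 → EuclideanSpace ℝ (Fin 3) :=
  ![pt 1 0 0, pt gold 0 0, pt 0 1 0, pt 0 gold 0, pt 0 0 1, pt 0 0 gold]

lemma vv0 : vv 0 = pt 1 0 0 := rfl
lemma vv1 : vv 1 = pt gold 0 0 := rfl
lemma vv2 : vv 2 = pt 0 1 0 := rfl
lemma vv3 : vv 3 = pt 0 gold 0 := rfl
lemma vv4 : vv 4 = pt 0 0 1 := rfl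
lemma vv5 : vv 5 = pt 0 0 gold := rfl

lemma pt_decomp (q0 q1 q2 q3 q4 q5 : ℚ) :
    pt (q0+q1*gold) (q2+q3*gold) (q4+q5*gold)
      = q0 • pt 1 0 0 + q1 • pt gold 0 0 + q2 • pt 0 1 0 + q3 • pt 0 gold 0
        + q4 • pt 0 0 1 + q5 • pt 0 0 gold := by
  ext i; fin_cases i <;> simp [pt, Rat.smul_def]

lemma rat_gold {q r : ℚ} (h : (q:ℝ) + r * gold = 0) : q = 0 ∧ r = 0 := by
  have h5 : Irrational (Real.sqrt 5) := (Nat.prime_five).irrational_sqrt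
  by_cases hr : r = 0
  · subst hr; simp at h; exact ⟨by exact_mod_cast h, rfl⟩
  · exfalso
    have hre : (r:ℝ) ≠ 0 := by exact_mod_cast hr
    have : Real.sqrt 5 = ((-2*q - r)/r : ℚ) := by
      push_cast
      unfold gold at h
      field_simp
      nlinarith [h]
    exact h5 ⟨_, this.symm⟩

lemma li_vv : LinearIndependent ℚ vv := by
  rw [Fintype.linearIndependent_iff]
  intro g hg
  have h0 : (∑ i, g i • vv i) 0 = 0 := by rw [hg]; rfl
  have h1 : (∑ i, g i • vv i) 1 = 0 := by rw [hg]; rfl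
  have h2 : (∑ i, g i • vv i) 2 = 0 := by rw [hg]; rfl
  simp [Fin.sum_univ_six, vv0, vv1, vv2, vv3, vv4, vv5, pt, Rat.smul_def,
    PiLp.add_apply, PiLp.smul_apply] at h0 h1 h2
  obtain ⟨e0, e1⟩ := rat_gold h0
  obtain ⟨e2, e3⟩ := rat_gold h1
  obtain ⟨e4, e5⟩ := rat_gold h2
  intro i; fin_cases i <;> assumption

/-- If all three coordinates lie in `ℚ + ℚ·gold`, the point is in the span of `vv`. -/
lemma good_mem {x y z : ℝ} (hx : ∃ q r : ℚ, x = q + r * gold)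
    (hy : ∃ q r : ℚ, y = q + r * gold) (hz : ∃ q r : ℚ, z = q + r * gold) :
    pt x y z ∈ Submodule.span ℚ (Set.range vv) := by
  obtain ⟨q0, q1, rfl⟩ := hx
  obtain ⟨q2, q3, rfl⟩ := hy
  obtain ⟨q4, q5, rfl⟩ := hz
  rw [pt_decomp]
  have m : ∀ i : Fin 6, vv i ∈ Submodule.span ℚ (Set.range vv) :=
    fun i => Submodule.subset_span ⟨i, rfl⟩
  exact Submodule.add_mem _ (Submodule.add_mem _ (Submodule.add_mem _ (Submodule.add_mem _
    (Submodule.add_mem _ (Submodule.smul_mem _ _ (m 0)) (Submodule.smul_mem _ _ (m 1)))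
    (Submodule.smul_mem _ _ (m 2))) (Submodule.smul_mem _ _ (m 3)))
    (Submodule.smul_mem _ _ (m 4))) (Submodule.smul_mem _ _ (m 5))

lemma gq0 : ∃ q r : ℚ, (0:ℝ) = q + r * gold := ⟨0, 0, by norm_num⟩
lemma gq1 : ∃ q r : ℚ, (1:ℝ) = q + r * gold := ⟨1, 0, by norm_num⟩
lemma gqm1 : ∃ q r : ℚ, (-1:ℝ) = q + r * gold := ⟨-1, 0, by push_cast; ring⟩
lemma gqg : ∃ q r : ℚ, (1*gold:ℝ) = q + r * gold := ⟨0, 1, by push_cast; ring⟩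
lemma gqmg : ∃ q r : ℚ, ((-1)*gold:ℝ) = q + r * gold := ⟨0, -1, by push_cast; ring⟩

lemma verts_mem_span : ∀ u ∈ icoVerts, u ∈ Submodule.span ℚ (Set.range vv) := by
  rintro u ⟨s, t, hs, ht, hw⟩
  rcases hs with rfl | rfl <;> rcases ht with rfl | rfl <;>
    rcases hw with rfl | rfl | rfl <;>
    refine good_mem ?_ ?_ ?_ <;>
    first
      | exact gq0
      | exact gq1
      | exact gqm1
      | exact gqg
      | exact gqmg

/- ### The six midpoints we use -/

lemma ma_mem : pt 0 0 gold ∈ icoMid := by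
  refine ⟨pt 0 1 (1*gold), ⟨1, 1, Or.inl rfl, Or.inl rfl, Or.inl rfl⟩,
    pt 0 (-1) (1*gold), ⟨-1, 1, Or.inr rfl, Or.inl rfl, Or.inl rfl⟩, ?_, ?_⟩
  · rw [pt_sub]; exact norm_pt_two (by norm_num)
  · ext i; fin_cases i <;> simp [pt] <;> ring

lemma mb_mem : pt gold 0 0 ∈ icoMid := by
  refine ⟨pt (1*gold) 0 1, ⟨1, 1, Or.inl rfl, Or.inl rfl, Or.inr (Or.inr rfl)⟩,
    pt (1*gold) 0 (-1), ⟨-1, 1, Or.inr rfl, Or.inl rfl, Or.inr (Or.inr rfl)⟩, ?_, ?_⟩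
  · rw [pt_sub]; exact norm_pt_two (by norm_num)
  · ext i; fin_cases i <;> simp [pt] <;> ring

lemma mc_mem : pt 0 gold 0 ∈ icoMid := by
  refine ⟨pt 1 (1*gold) 0, ⟨1, 1, Or.inl rfl, Or.inl rfl, Or.inr (Or.inl rfl)⟩,
    pt (-1) (1*gold) 0, ⟨-1, 1, Or.inr rfl, Or.inl rfl, Or.inr (Or.inl rfl)⟩, ?_, ?_⟩
  · rw [pt_sub]; exact norm_pt_two (by norm_num)
  · ext i; fin_cases i <;> simp [pt] <;> ring

lemma m1_mem : pt (1/2) ((1+gold)/2) (gold/2) ∈ icoMid := by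
  refine ⟨pt 0 1 (1*gold), ⟨1, 1, Or.inl rfl, Or.inl rfl, Or.inl rfl⟩,
    pt 1 (1*gold) 0, ⟨1, 1, Or.inl rfl, Or.inl rfl, Or.inr (Or.inl rfl)⟩, ?_, ?_⟩
  · rw [pt_sub]; exact norm_pt_two (by linear_combination 2*gsq)
  · ext i; fin_cases i <;> simp [pt] <;> ring

lemma m2_mem : pt ((1+gold)/2) (gold/2) (1/2) ∈ icoMid := by
  refine ⟨pt 1 (1*gold) 0, ⟨1, 1, Or.inl rfl, Or.inl rfl, Or.inr (Or.inl rfl)⟩,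
    pt (1*gold) 0 1, ⟨1, 1, Or.inl rfl, Or.inl rfl, Or.inr (Or.inr rfl)⟩, ?_, ?_⟩
  · rw [pt_sub]; exact norm_pt_two (by linear_combination 2*gsq)
  · ext i; fin_cases i <;> simp [pt] <;> ring

lemma m3_mem : pt (1/2) (-(1+gold)/2) (gold/2) ∈ icoMid := by
  refine ⟨pt 0 (-1) (1*gold), ⟨-1, 1, Or.inr rfl, Or.inl rfl, Or.inl rfl⟩,
    pt 1 ((-1)*gold) 0, ⟨1, -1, Or.inl rfl, Or.inr rfl, Or.inr (Or.inl rfl)⟩, ?_, ?_⟩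
  · rw [pt_sub]; exact norm_pt_two (by linear_combination 2*gsq)
  · ext i; fin_cases i <;> simp [pt] <;> ring

lemma vv_mem_span : ∀ i : Fin 6, vv i ∈ Submodule.span ℚ icoMid := by
  have ha := Submodule.subset_span (R := ℚ) ma_mem
  have hb := Submodule.subset_span (R := ℚ) mb_mem
  have hc := Submodule.subset_span (R := ℚ) mc_mem
  have h1 := Submodule.subset_span (R := ℚ) m1_mem
  have h2 := Submodule.subset_span (R := ℚ) m2_mem
  have h3 := Submodule.subset_span (R := ℚ) m3_mem
  intro i
  fin_cases i
  · show vv 0 ∈ _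
    have : vv 0 = pt (1/2) ((1+gold)/2) (gold/2) + pt (1/2) (-(1+gold)/2) (gold/2)
        - pt 0 0 gold := by
      rw [vv0]; ext i; fin_cases i <;> simp [pt] <;> ring
    rw [this]; exact Submodule.sub_mem _ (Submodule.add_mem _ h1 h3) ha
  · exact hb
  · show vv 2 ∈ _
    have : vv 2 = pt (1/2) ((1+gold)/2) (gold/2) - pt (1/2) (-(1+gold)/2) (gold/2)
        - pt 0 gold 0 := by
      rw [vv2]; ext i; fin_cases i <;> simp [pt] <;> ring
    rw [this]; exact Submodule.sub_mem _ (Submodule.sub_mem _ h1 h3) hc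
  · exact hc
  · show vv 4 ∈ _
    have : vv 4 = (2:ℚ) • pt ((1+gold)/2) (gold/2) (1/2) - pt gold 0 0 - pt 0 gold 0
        - pt (1/2) ((1+gold)/2) (gold/2) - pt (1/2) (-(1+gold)/2) (gold/2)
        + pt 0 0 gold := by
      rw [vv4]; ext i; fin_cases i <;> simp [pt, Rat.smul_def] <;> push_cast <;> ring
    rw [this]
    exact Submodule.add_mem _ (Submodule.sub_mem _ (Submodule.sub_mem _ (Submodule.sub_mem _
      (Submodule.sub_mem _ (Submodule.smul_mem _ _ h2) hb) hc) h1) h3) ha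
  · exact ha

lemma span_eq : Submodule.span ℚ icoMid = Submodule.span ℚ (Set.range vv) := by
  apply le_antisymm
  · rw [Submodule.span_le]
    rintro e ⟨u, hu, v, hv, _, rfl⟩
    have hu' := verts_mem_span u hu
    have hv' := verts_mem_span v hv
    have : (2⁻¹ : ℝ) • (u + v) = (2⁻¹ : ℚ) • (u + v) := by
      ext i; simp [PiLp.smul_apply, Rat.smul_def, mul_add]
    rw [this]
    exact Submodule.smul_mem _ _ (Submodule.add_mem _ hu' hv')
  · rw [Submodule.span_le]
    rintro x ⟨i, rfl⟩
    exact vv_mem_span i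

/-- Regarding `ℝ³` as a vector space over `ℚ`, the ℚ-linear span of the set `E` of edge
midpoints of the regular icosahedron has dimension exactly 6. -/
theorem rank_span_rat_icoMid :
    Module.rank ℚ ↥(Submodule.span ℚ icoMid) = 6 := by
  rw [span_eq, rank_span li_vv, Cardinal.mk_range_eq vv li_vv.injective, Cardinal.mk_fin]
  norm_num

end
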